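/- Sp_4(F) is the disjoint union of the four double cosets Q·S_ψ, Q·τ₁⁻¹·S_ψ, Q·σ₁⁻¹·S_ψ and Q·(τ₁σ₁)⁻¹·S_ψ; that is, {I₄, τ₁⁻¹, σ₁⁻¹, (τ₁σ₁)⁻¹} is a complete set of (Q, S_ψ)-double coset representatives in Sp_4(F). -/

import Mathlib

open Matrix

variable (F : Type*) [Field F]

/-- The standard alternating matrix `J = [[0, I₂], [-I₂, 0]]`. -/
def Jmat : Matrix (Fin 2 ⊕ Fin 2) (Fin 2 ⊕ Fin 2) F := Matrix.fromBlocks 0 1 (-1) 0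

/-- The symplectic group `Sp₄(F)`, as a set of matrices. -/
def Sp4 : Set (Matrix (Fin 2 ⊕ Fin 2) (Fin 2 ⊕ Fin 2) F) :=
  {g | gᵀ * Jmat F * g = Jmat F}

/-- The Siegel parabolic subgroup `P` of `Sp₄(F)`, as a set of matrices. -/
def P4 : Set (Matrix (Fin 2 ⊕ Fin 2) (Fin 2 ⊕ Fin 2) F) :=
  {m | ∃ g X : Matrix (Fin 2) (Fin 2) F,
    IsUnit g ∧ (g⁻¹ * X)ᵀ = g⁻¹ * X ∧ m = Matrix.fromBlocks g X 0 (g⁻¹)ᵀ}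

/-- `O₂(F, C) = {[[a, 0], [y, d]] : a² = 1, d ≠ 0, y ∈ F}`. -/
def O2C : Set (Matrix (Fin 2) (Fin 2) F) :=
  {g | ∃ a d y : F, a ^ 2 = 1 ∧ d ≠ 0 ∧ g = !![a, 0; y, d]}

/-- `S_ψ = {[[g, X], [0, ᵗg⁻¹]] ∈ P : g ∈ O₂(F, C)}`. -/
def Spsi : Set (Matrix (Fin 2 ⊕ Fin 2) (Fin 2 ⊕ Fin 2) F) :=
  {m | ∃ g X : Matrix (Fin 2) (Fin 2) F,
    g ∈ O2C F ∧ IsUnit g ∧ (g⁻¹ * X)ᵀ = g⁻¹ * X ∧ m = Matrix.fromBlocks g X 0 (g⁻¹)ᵀ}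

/-- `σ₁ = [[0,0,-1,0],[0,1,0,0],[1,0,0,0],[0,0,0,1]]`. -/
def sig1 : Matrix (Fin 2 ⊕ Fin 2) (Fin 2 ⊕ Fin 2) F :=
  Matrix.fromBlocks !![0, 0; 0, 1] !![-1, 0; 0, 0] !![1, 0; 0, 0] !![0, 0; 0, 1]

/-- `σ₂ = [[0, -I₂], [I₂, 0]]`. -/
def sig2 : Matrix (Fin 2 ⊕ Fin 2) (Fin 2 ⊕ Fin 2) F := Matrix.fromBlocks 0 (-1) 1 0

/-- `τ₁ = diag(h₁, h₁)` with `h₁ = [[0,1],[1,0]]`. -/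
def tau1 : Matrix (Fin 2 ⊕ Fin 2) (Fin 2 ⊕ Fin 2) F :=
  Matrix.fromBlocks !![0, 1; 1, 0] 0 0 !![0, 1; 1, 0]

/-- Double coset `A · w · B`. -/
def DC {α : Type*} [Mul α] (A : Set α) (w : α) (B : Set α) : Set α :=
  {x | ∃ a ∈ A, ∃ b ∈ B, x = a * w * b}

/-- The Klingen parabolic subgroup `Q`: the stabilizer in `Sp₄(F)` of the line `F·e₁`. -/
def Qkl : Set (Matrix (Fin 2 ⊕ Fin 2) (Fin 2 ⊕ Fin 2) F) :=
  {m | m ∈ Sp4 F ∧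
    Submodule.map (Matrix.mulVecLin m)
      (Submodule.span F {Pi.single (Sum.inl 0) 1}) =
    Submodule.span F {(Pi.single (Sum.inl 0) 1 : (Fin 2 ⊕ Fin 2) → F)}}

variable {F}

lemma Jmat_mul_Jmat : Jmat F * Jmat F = -1 := by
  simp [Jmat, Matrix.fromBlocks_multiply]
  ext i j
  rcases i with i | i <;> rcases j with j | j <;>
    simp [Matrix.fromBlocks, Matrix.one_apply, Sum.elim]

lemma neg_Jmat_mul_Jmat : (-Jmat F) * Jmat F = 1 := by
  rw [Matrix.neg_mul, Jmat_mul_Jmat, neg_neg]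

lemma sp4_one : (1 : Matrix _ _ F) ∈ Sp4 F := by simp [Sp4]

lemma sp4_mul {a b : Matrix _ _ F} (ha : a ∈ Sp4 F) (hb : b ∈ Sp4 F) :
    a * b ∈ Sp4 F := by
  simp only [Sp4, Set.mem_setOf_eq] at *
  rw [Matrix.transpose_mul]
  calc bᵀ * aᵀ * Jmat F * (a * b) = bᵀ * (aᵀ * Jmat F * a) * b := by
        simp only [Matrix.mul_assoc]
  _ = Jmat F := by rw [ha, hb]

lemma sp4_isUnit {a : Matrix _ _ F} (ha : a ∈ Sp4 F) : IsUnit a := by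
  refine (Matrix.isUnit_iff_isUnit_det a).mpr (Matrix.isUnit_det_of_left_inverse (B := (-Jmat F) * aᵀ * Jmat F) ?_)
  calc (-Jmat F) * aᵀ * Jmat F * a = (-Jmat F) * (aᵀ * Jmat F * a) := by
        simp only [Matrix.mul_assoc]
  _ = 1 := by rw [ha, neg_Jmat_mul_Jmat]

lemma sp4_isUnit_det {a : Matrix _ _ F} (ha : a ∈ Sp4 F) : IsUnit a.det :=
  (Matrix.isUnit_iff_isUnit_det a).mp (sp4_isUnit ha)

lemma sp4_inv {a : Matrix _ _ F} (ha : a ∈ Sp4 F) : a⁻¹ ∈ Sp4 F := by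
  have hu := sp4_isUnit_det ha
  have h1 : a * a⁻¹ = 1 := Matrix.mul_nonsing_inv a hu
  have h2 : (aᵀ)⁻¹ * aᵀ = 1 := Matrix.nonsing_inv_mul aᵀ (by simpa using hu)
  show (a⁻¹)ᵀ * Jmat F * a⁻¹ = Jmat F
  have ha' : aᵀ * Jmat F * a = Jmat F := ha
  rw [Matrix.transpose_nonsing_inv]
  calc (aᵀ)⁻¹ * Jmat F * a⁻¹ = (aᵀ)⁻¹ * (aᵀ * Jmat F * a) * a⁻¹ := by rw [ha']
  _ = ((aᵀ)⁻¹ * aᵀ) * Jmat F * (a * a⁻¹) := by simp only [Matrix.mul_assoc]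
  _ = Jmat F := by rw [h1, h2, Matrix.one_mul, Matrix.mul_one]

lemma spsi_subset_sp4 : Spsi F ⊆ Sp4 F := by
  rintro m ⟨g, X, hgO, hg, hsym, rfl⟩
  have hdet : IsUnit g.det := (Matrix.isUnit_iff_isUnit_det g).mp hg
  have h1 : g⁻¹ * g = 1 := Matrix.nonsing_inv_mul g hdet
  show (Matrix.fromBlocks g X 0 (g⁻¹)ᵀ)ᵀ * Jmat F * Matrix.fromBlocks g X 0 (g⁻¹)ᵀ = Jmat F
  rw [Matrix.fromBlocks_transpose]
  show Matrix.fromBlocks gᵀ 0ᵀ Xᵀ ((g⁻¹)ᵀ)ᵀ * Matrix.fromBlocks 0 1 (-1) 0 *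
      Matrix.fromBlocks g X 0 (g⁻¹)ᵀ = Matrix.fromBlocks 0 1 (-1) 0
  rw [Matrix.fromBlocks_multiply, Matrix.fromBlocks_multiply]
  have e1 : gᵀ * (g⁻¹)ᵀ = 1 := by rw [← Matrix.transpose_mul, h1, Matrix.transpose_one]
  have e2 : Xᵀ * (g⁻¹)ᵀ = g⁻¹ * X := by
    rw [← Matrix.transpose_mul, hsym]
  congr 1 <;> simp [e1, e2, h1, Matrix.mul_assoc]

lemma isUnit_lower {a y d : F} (ha : a ^ 2 = 1) (hd : d ≠ 0) : IsUnit !![a, 0; y, d] := by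
  have ha0 : a ≠ 0 := by rintro rfl; simp at ha
  rw [Matrix.isUnit_iff_isUnit_det, Matrix.det_fin_two_of]
  simpa using (isUnit_iff_ne_zero.mpr (mul_ne_zero ha0 hd))

lemma inv_lower {a y d : F} (ha : a ^ 2 = 1) (hd : d ≠ 0) :
    (!![a, 0; y, d])⁻¹ = !![a, 0; -(y * a) / d, d⁻¹] := by
  have ha0 : a ≠ 0 := by rintro rfl; simp at ha
  apply Matrix.inv_eq_right_inv
  have h : a * a = 1 := by rw [← sq]; exact ha
  have h2 : y * a + d * (-(y * a) / d) = 0 := by field_simp; ring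
  rw [Matrix.mul_fin_two, Matrix.one_fin_two]
  simp [h, h2, mul_inv_cancel₀ hd]

lemma o2c_inv {g : Matrix (Fin 2) (Fin 2) F} (hg : g ∈ O2C F) : g⁻¹ ∈ O2C F := by
  obtain ⟨a, d, y, ha, hd, rfl⟩ := hg
  rw [inv_lower ha hd]
  exact ⟨a, d⁻¹, -(y * a) / d, ha, inv_ne_zero hd, rfl⟩

lemma spsi_inv {s : Matrix (Fin 2 ⊕ Fin 2) (Fin 2 ⊕ Fin 2) F} (hs : s ∈ Spsi F) :
    s⁻¹ ∈ Spsi F := by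
  obtain ⟨g, X, hgO, hg, hsym, rfl⟩ := hs
  have hdet : IsUnit g.det := (Matrix.isUnit_iff_isUnit_det g).mp hg
  have h1 : g⁻¹ * g = 1 := Matrix.nonsing_inv_mul g hdet
  have h2 : g * g⁻¹ = 1 := Matrix.mul_nonsing_inv g hdet
  have h3 : (g⁻¹)ᵀ * gᵀ = 1 := by rw [← Matrix.transpose_mul, h2, Matrix.transpose_one]
  have hgXT : g * Xᵀ = X * gᵀ := by
    have h4 : Xᵀ * (g⁻¹)ᵀ = g⁻¹ * X := by rw [← Matrix.transpose_mul, hsym]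
    calc g * Xᵀ = g * Xᵀ * ((g⁻¹)ᵀ * gᵀ) := by rw [h3, Matrix.mul_one]
    _ = g * (Xᵀ * (g⁻¹)ᵀ) * gᵀ := by simp only [Matrix.mul_assoc]
    _ = g * (g⁻¹ * X) * gᵀ := by rw [h4]
    _ = (g * g⁻¹) * X * gᵀ := by simp only [Matrix.mul_assoc]
    _ = X * gᵀ := by rw [h2, Matrix.one_mul]
  have hinv : (Matrix.fromBlocks g X 0 (g⁻¹)ᵀ)⁻¹ =
      Matrix.fromBlocks g⁻¹ (-(g⁻¹ * X * gᵀ)) 0 gᵀ := by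
    apply Matrix.inv_eq_right_inv
    rw [Matrix.fromBlocks_multiply]
    have hB : g * -(g⁻¹ * X * gᵀ) + X * gᵀ = 0 := by
      rw [Matrix.mul_neg, ← Matrix.mul_assoc, ← Matrix.mul_assoc, h2, Matrix.one_mul,
        neg_add_cancel]
    rw [← Matrix.fromBlocks_one (l := Fin 2) (m := Fin 2) (α := F)]
    rw [hB]
    congr 1 <;> simp [h2, h3]
  rw [hinv]
  refine ⟨g⁻¹, -(g⁻¹ * X * gᵀ), o2c_inv hgO, ?_, ?_, ?_⟩
  · exact Matrix.isUnit_nonsing_inv_iff.mpr hg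
  · have hgi : g⁻¹⁻¹ = g := Matrix.nonsing_inv_nonsing_inv g hdet
    rw [hgi]
    rw [Matrix.mul_neg, ← Matrix.mul_assoc, ← Matrix.mul_assoc, h2, Matrix.one_mul]
    rw [Matrix.transpose_neg, Matrix.transpose_mul, Matrix.transpose_transpose]
    rw [hgXT]
  · have hgi : g⁻¹⁻¹ = g := Matrix.nonsing_inv_nonsing_inv g hdet
    rw [hgi]

noncomputable abbrev e1F (F : Type*) [Field F] : (Fin 2 ⊕ Fin 2) → F :=
  Pi.single (Sum.inl 0) 1

lemma e1F_ne_zero : e1F F ≠ 0 := by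
  intro h
  have := congrFun h (Sum.inl 0)
  simp [e1F] at this

lemma mem_Qkl_iff {m : Matrix (Fin 2 ⊕ Fin 2) (Fin 2 ⊕ Fin 2) F} :
    m ∈ Qkl F ↔ m ∈ Sp4 F ∧ ∃ c : F, c ≠ 0 ∧ m.mulVec (e1F F) = c • e1F F := by
  constructor
  · rintro ⟨hsp, hmap⟩
    refine ⟨hsp, ?_⟩
    have h1 : m.mulVec (e1F F) ∈ Submodule.span F {e1F F} := by
      rw [← hmap]
      exact Submodule.mem_map_of_mem (Submodule.mem_span_singleton_self _)
    obtain ⟨c, hc⟩ := Submodule.mem_span_singleton.mp h1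
    refine ⟨c, ?_, hc.symm⟩
    intro hc0
    have h2 : (e1F F : (Fin 2 ⊕ Fin 2) → F) ∈ Submodule.map (Matrix.mulVecLin m)
        (Submodule.span F {e1F F}) := by rw [hmap]; exact Submodule.mem_span_singleton_self _
    obtain ⟨v, hv, hve⟩ := h2
    obtain ⟨b, hb⟩ := Submodule.mem_span_singleton.mp hv
    rw [← hb] at hve
    have : (e1F F : (Fin 2 ⊕ Fin 2) → F) = b • m.mulVec (e1F F) := by
      conv_lhs => rw [← hve, Matrix.mulVecLin_apply, Matrix.mulVec_smul]
    rw [← hc, hc0, zero_smul, smul_zero] at this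
    exact e1F_ne_zero this
  · rintro ⟨hsp, c, hc0, hc⟩
    refine ⟨hsp, ?_⟩
    rw [Submodule.map_span, Set.image_singleton]
    have : Matrix.mulVecLin m (e1F F) = c • e1F F := by
      rw [Matrix.mulVecLin_apply, hc]
    rw [this]
    exact Submodule.span_singleton_smul_eq (isUnit_iff_ne_zero.mpr hc0) _

lemma transpose_fin2 {a b c d : F} : (!![a, b; c, d])ᵀ = !![a, c; b, d] := by
  ext i j; fin_cases i <;> fin_cases j <;> rfl

lemma fromBlocks_mulVec_inl (A B C D : Matrix (Fin 2) (Fin 2) F)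
    (u : (Fin 2 ⊕ Fin 2) → F) (i : Fin 2) :
    (Matrix.fromBlocks A B C D *ᵥ u) (Sum.inl i) =
      A i 0 * u (Sum.inl 0) + A i 1 * u (Sum.inl 1) +
      (B i 0 * u (Sum.inr 0) + B i 1 * u (Sum.inr 1)) := by
  simp [Matrix.mulVec, dotProduct, Fintype.sum_sum_type, Fin.sum_univ_two]

lemma fromBlocks_mulVec_inr (A B C D : Matrix (Fin 2) (Fin 2) F)
    (u : (Fin 2 ⊕ Fin 2) → F) (i : Fin 2) :
    (Matrix.fromBlocks A B C D *ᵥ u) (Sum.inr i) =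
      C i 0 * u (Sum.inl 0) + C i 1 * u (Sum.inl 1) +
      (D i 0 * u (Sum.inr 0) + D i 1 * u (Sum.inr 1)) := by
  simp [Matrix.mulVec, dotProduct, Fintype.sum_sum_type, Fin.sum_univ_two]

lemma spsi_mulVec {s : Matrix (Fin 2 ⊕ Fin 2) (Fin 2 ⊕ Fin 2) F} (hs : s ∈ Spsi F)
    (u : (Fin 2 ⊕ Fin 2) → F) :
    ∃ α β : F, α ≠ 0 ∧ β ≠ 0 ∧
      (s *ᵥ u) (Sum.inr 1) = β * u (Sum.inr 1) ∧
      (u (Sum.inr 1) = 0 → (s *ᵥ u) (Sum.inr 0) = α * u (Sum.inr 0)) ∧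
      (u (Sum.inr 1) = 0 → u (Sum.inr 0) = 0 →
        (s *ᵥ u) (Sum.inl 0) = α * u (Sum.inl 0)) := by
  obtain ⟨g, X, ⟨a, d, y, ha, hd, rfl⟩, hg, hsym, rfl⟩ := hs
  have ha0 : a ≠ 0 := by rintro rfl; simp at ha
  rw [inv_lower ha hd, transpose_fin2]
  refine ⟨a, d⁻¹, ha0, inv_ne_zero hd, ?_, ?_, ?_⟩
  · rw [fromBlocks_mulVec_inr]; simp
  · intro h4
    rw [fromBlocks_mulVec_inr]; simp [h4]
  · intro h4 h3
    rw [fromBlocks_mulVec_inl]; simp [h4, h3]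

lemma mk_spsi {a y d : F} (ha : a ^ 2 = 1) (hd : d ≠ 0) (S : Matrix (Fin 2) (Fin 2) F)
    (hS : Sᵀ = S) :
    Matrix.fromBlocks !![a, 0; y, d] (!![a, 0; y, d] * S) 0 ((!![a, 0; y, d])⁻¹)ᵀ
      ∈ Spsi F := by
  have hu := isUnit_lower (y := y) ha hd
  have hdet : IsUnit (!![a, 0; y, d]).det := (Matrix.isUnit_iff_isUnit_det _).mp hu
  refine ⟨_, _, ⟨a, d, y, ha, hd, rfl⟩, hu, ?_, rfl⟩
  rw [← Matrix.mul_assoc, Matrix.nonsing_inv_mul _ hdet, Matrix.one_mul, hS]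

lemma orbit (u : (Fin 2 ⊕ Fin 2) → F) (hu : u ≠ 0) :
    (∃ s ∈ Spsi F, ∃ c : F, c ≠ 0 ∧ s *ᵥ u = c • (Pi.single (Sum.inl 0) 1 : (Fin 2 ⊕ Fin 2) → F)) ∨
    (∃ s ∈ Spsi F, ∃ c : F, c ≠ 0 ∧ s *ᵥ u = c • (Pi.single (Sum.inl 1) 1 : (Fin 2 ⊕ Fin 2) → F)) ∨
    (∃ s ∈ Spsi F, ∃ c : F, c ≠ 0 ∧ s *ᵥ u = c • (Pi.single (Sum.inr 0) 1 : (Fin 2 ⊕ Fin 2) → F)) ∨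
    (∃ s ∈ Spsi F, ∃ c : F, c ≠ 0 ∧ s *ᵥ u = c • (Pi.single (Sum.inr 1) 1 : (Fin 2 ⊕ Fin 2) → F)) := by
  set u1 := u (Sum.inl 0) with hu1
  set u2 := u (Sum.inl 1) with hu2
  set u3 := u (Sum.inr 0) with hu3
  set u4 := u (Sum.inr 1) with hu4
  by_cases h4 : u4 ≠ 0
  · -- orbit of e4
    right; right; right
    set s2 : F := -u1 / u4 with hs2
    set s3 : F := (-u2 - s2 * u3) / u4 with hs3
    set S : Matrix (Fin 2) (Fin 2) F := !![0, s2; s2, s3] with hSdef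
    refine ⟨_, mk_spsi (a := 1) (y := u3) (d := u4) (by norm_num) h4 S
      (by rw [transpose_fin2]), 1, one_ne_zero, ?_⟩
    rw [inv_lower (by norm_num) h4, transpose_fin2, hSdef, Matrix.mul_fin_two]
    funext i
    rcases i with i | i <;> fin_cases i <;>
      simp only [fromBlocks_mulVec_inl, fromBlocks_mulVec_inr, Matrix.mul_fin_two] <;>
      simp [Pi.single_apply, ← hu1, ← hu2, ← hu3, ← hu4, hs2, hs3] <;>
      (try field_simp) <;> (try ring)
  · push_neg at h4
    by_cases h3 : u3 ≠ 0
    · -- orbit of e3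
      right; right; left
      set S : Matrix (Fin 2) (Fin 2) F := !![-u1 / u3, -u2 / u3; -u2 / u3, 0] with hSdef
      refine ⟨_, mk_spsi (a := 1) (y := 0) (d := 1) (by norm_num) one_ne_zero S
        (by rw [transpose_fin2]), u3, h3, ?_⟩
      rw [inv_lower (by norm_num) one_ne_zero, transpose_fin2, hSdef, Matrix.mul_fin_two]
      funext i
      rcases i with i | i <;> fin_cases i <;>
        simp only [fromBlocks_mulVec_inl, fromBlocks_mulVec_inr, Matrix.mul_fin_two] <;>
        simp [Pi.single_apply, ← hu1, ← hu2, ← hu3, ← hu4, h4] <;>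
        (try field_simp) <;> (try ring)
    · push_neg at h3
      by_cases h1 : u1 ≠ 0
      · -- orbit of e1
        left
        refine ⟨_, mk_spsi (a := 1) (y := -u2 / u1) (d := 1) (by norm_num) one_ne_zero 0
          (by rw [Matrix.transpose_zero]), u1, h1, ?_⟩
        rw [inv_lower (by norm_num) one_ne_zero, transpose_fin2]
        funext i
        rcases i with i | i <;> fin_cases i <;>
          simp only [fromBlocks_mulVec_inl, fromBlocks_mulVec_inr, Matrix.mul_fin_two,
            Matrix.mul_zero] <;>
          simp [Pi.single_apply, ← hu1, ← hu2, ← hu3, ← hu4, h4, h3] <;>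
          (try field_simp) <;> (try ring)
      · push_neg at h1
        -- orbit of e2
        right; left
        have h2 : u2 ≠ 0 := by
          intro h2
          apply hu
          funext i
          rcases i with i | i <;> fin_cases i <;>
            simp [← hu1, ← hu2, ← hu3, ← hu4, h1, h2, h3, h4]
        refine ⟨_, mk_spsi (a := 1) (y := 0) (d := 1) (by norm_num) one_ne_zero 0
          (by rw [Matrix.transpose_zero]), u2, h2, ?_⟩
        rw [inv_lower (by norm_num) one_ne_zero, transpose_fin2]
        funext i
        rcases i with i | i <;> fin_cases i <;>
          simp only [fromBlocks_mulVec_inl, fromBlocks_mulVec_inr, Matrix.mul_fin_two,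
            Matrix.mul_zero] <;>
          simp [Pi.single_apply, ← hu1, ← hu2, ← hu3, ← hu4, h4, h3, h1]

lemma sp4_tau1 : tau1 F ∈ Sp4 F := by
  show (tau1 F)ᵀ * Jmat F * tau1 F = Jmat F
  ext i j
  rcases i with i | i <;> rcases j with j | j <;> fin_cases i <;> fin_cases j <;>
    simp [tau1, Jmat, Matrix.mul_apply, Matrix.transpose_apply, Fintype.sum_sum_type,
      Fin.sum_univ_two, Matrix.fromBlocks]

lemma sp4_sig1 : sig1 F ∈ Sp4 F := by
  show (sig1 F)ᵀ * Jmat F * sig1 F = Jmat F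
  ext i j
  rcases i with i | i <;> rcases j with j | j <;> fin_cases i <;> fin_cases j <;>
    simp [sig1, Jmat, Matrix.mul_apply, Matrix.transpose_apply, Fintype.sum_sum_type,
      Fin.sum_univ_two, Matrix.fromBlocks]

lemma tau1_mulVec_e1 : tau1 F *ᵥ e1F F = Pi.single (Sum.inl 1) 1 := by
  funext i
  rw [e1F, Matrix.mulVec_single]
  rcases i with i | i <;> fin_cases i <;>
    simp [tau1, Matrix.fromBlocks, Pi.single_apply]

lemma sig1_mulVec_e1 : sig1 F *ᵥ e1F F = Pi.single (Sum.inr 0) 1 := by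
  funext i
  rw [e1F, Matrix.mulVec_single]
  rcases i with i | i <;> fin_cases i <;>
    simp [sig1, Matrix.fromBlocks, Pi.single_apply]

lemma tausig_mulVec_e1 : (tau1 F * sig1 F) *ᵥ e1F F = Pi.single (Sum.inr 1) 1 := by
  rw [← Matrix.mulVec_mulVec, sig1_mulVec_e1]
  funext i
  rw [Matrix.mulVec_single]
  rcases i with i | i <;> fin_cases i <;>
    simp [tau1, Matrix.fromBlocks, Pi.single_apply]

lemma mem_DC_of {m W : Matrix (Fin 2 ⊕ Fin 2) (Fin 2 ⊕ Fin 2) F}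
    (hm : m ∈ Sp4 F) (hW : W ∈ Sp4 F) {k : Fin 2 ⊕ Fin 2}
    (hWe : W *ᵥ e1F F = Pi.single k 1)
    {s : Matrix (Fin 2 ⊕ Fin 2) (Fin 2 ⊕ Fin 2) F} (hs : s ∈ Spsi F) {c : F} (hc : c ≠ 0)
    (hsu : s *ᵥ (m⁻¹ *ᵥ e1F F) = c • (Pi.single k 1 : (Fin 2 ⊕ Fin 2) → F)) :
    m ∈ DC (Qkl F) W⁻¹ (Spsi F) := by
  have hssp := spsi_subset_sp4 hs
  have hsdet := sp4_isUnit_det hssp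
  have hWdet := sp4_isUnit_det hW
  have hmdet := sp4_isUnit_det hm
  refine ⟨m * s⁻¹ * W, ?_, s, hs, ?_⟩
  · rw [mem_Qkl_iff]
    refine ⟨sp4_mul (sp4_mul hm (sp4_inv hssp)) hW, c⁻¹, inv_ne_zero hc, ?_⟩
    have h1 : (Pi.single k 1 : (Fin 2 ⊕ Fin 2) → F) = c⁻¹ • (s *ᵥ (m⁻¹ *ᵥ e1F F)) := by
      rw [hsu, smul_smul, inv_mul_cancel₀ hc, one_smul]
    rw [← Matrix.mulVec_mulVec, ← Matrix.mulVec_mulVec, hWe, h1, Matrix.mulVec_smul,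
      Matrix.mulVec_mulVec, Matrix.nonsing_inv_mul s hsdet, Matrix.one_mulVec,
      Matrix.mulVec_smul, Matrix.mulVec_mulVec, Matrix.mul_nonsing_inv m hmdet,
      Matrix.one_mulVec]
  · rw [Matrix.mul_assoc (m * s⁻¹) W W⁻¹, Matrix.mul_nonsing_inv W hWdet, Matrix.mul_one,
      Matrix.mul_assoc m s⁻¹ s, Matrix.nonsing_inv_mul s hsdet, Matrix.mul_one]

lemma DC_inv_coord {m W : Matrix (Fin 2 ⊕ Fin 2) (Fin 2 ⊕ Fin 2) F}
    (hW : W ∈ Sp4 F) {k : Fin 2 ⊕ Fin 2} (hWe : W *ᵥ e1F F = Pi.single k 1)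
    (hm : m ∈ DC (Qkl F) W⁻¹ (Spsi F)) :
    ∃ s ∈ Spsi F, ∃ c : F, c ≠ 0 ∧
      s *ᵥ (m⁻¹ *ᵥ e1F F) = c • (Pi.single k 1 : (Fin 2 ⊕ Fin 2) → F) := by
  obtain ⟨q, hq, s, hs, rfl⟩ := hm
  obtain ⟨hqsp, c, hc, hqe⟩ := mem_Qkl_iff.mp hq
  have hssp := spsi_subset_sp4 hs
  have hsdet := sp4_isUnit_det hssp
  have hWdet := sp4_isUnit_det hW
  have hqdet := sp4_isUnit_det hqsp
  have hminv : (q * W⁻¹ * s)⁻¹ = s⁻¹ * (W * q⁻¹) := by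
    rw [Matrix.mul_inv_rev, Matrix.mul_inv_rev, Matrix.nonsing_inv_nonsing_inv W hWdet]
  have hqe' : q⁻¹ *ᵥ e1F F = c⁻¹ • e1F F := by
    have h1 : q⁻¹ *ᵥ (q *ᵥ e1F F) = e1F F := by
      rw [Matrix.mulVec_mulVec, Matrix.nonsing_inv_mul q hqdet, Matrix.one_mulVec]
    rw [hqe, Matrix.mulVec_smul] at h1
    have h2 := congrArg (fun v => c⁻¹ • v) h1
    simp only [smul_smul, inv_mul_cancel₀ hc, one_smul] at h2
    exact h2
  refine ⟨s, hs, c⁻¹, inv_ne_zero hc, ?_⟩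
  rw [hminv, Matrix.mulVec_mulVec, ← Matrix.mul_assoc, Matrix.mul_nonsing_inv s hsdet,
    Matrix.one_mul, ← Matrix.mulVec_mulVec, hqe', Matrix.mulVec_smul, hWe]

lemma type4 {s : Matrix (Fin 2 ⊕ Fin 2) (Fin 2 ⊕ Fin 2) F} (hs : s ∈ Spsi F)
    {u : (Fin 2 ⊕ Fin 2) → F} {c : F} (hc : c ≠ 0)
    (hsu : s *ᵥ u = c • (Pi.single (Sum.inr 1) 1 : (Fin 2 ⊕ Fin 2) → F)) :
    u (Sum.inr 1) ≠ 0 := by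
  obtain ⟨α, β, hα, hβ, hr1, hr0, hl0⟩ := spsi_mulVec hs u
  have h := congrFun hsu (Sum.inr 1)
  rw [hr1] at h
  simp only [Pi.smul_apply, Pi.single_eq_same, smul_eq_mul, mul_one] at h
  intro h0; rw [h0, mul_zero] at h; exact hc h.symm

lemma type3 {s : Matrix (Fin 2 ⊕ Fin 2) (Fin 2 ⊕ Fin 2) F} (hs : s ∈ Spsi F)
    {u : (Fin 2 ⊕ Fin 2) → F} {c : F} (hc : c ≠ 0)
    (hsu : s *ᵥ u = c • (Pi.single (Sum.inr 0) 1 : (Fin 2 ⊕ Fin 2) → F)) :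
    u (Sum.inr 1) = 0 ∧ u (Sum.inr 0) ≠ 0 := by
  obtain ⟨α, β, hα, hβ, hr1, hr0, hl0⟩ := spsi_mulVec hs u
  have h1 := congrFun hsu (Sum.inr 1)
  rw [hr1] at h1
  simp only [Pi.smul_apply, smul_eq_mul] at h1
  rw [Pi.single_eq_of_ne (by simp) 1, mul_zero] at h1
  have h4 : u (Sum.inr 1) = 0 := by
    rcases mul_eq_zero.mp h1 with h | h
    · exact absurd h hβ
    · exact h
  refine ⟨h4, ?_⟩
  have h0 := congrFun hsu (Sum.inr 0)
  rw [hr0 h4] at h0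
  simp only [Pi.smul_apply, Pi.single_eq_same, smul_eq_mul, mul_one] at h0
  intro hz; rw [hz, mul_zero] at h0; exact hc h0.symm

lemma type1 {s : Matrix (Fin 2 ⊕ Fin 2) (Fin 2 ⊕ Fin 2) F} (hs : s ∈ Spsi F)
    {u : (Fin 2 ⊕ Fin 2) → F} {c : F} (hc : c ≠ 0)
    (hsu : s *ᵥ u = c • (Pi.single (Sum.inl 0) 1 : (Fin 2 ⊕ Fin 2) → F)) :
    u (Sum.inr 1) = 0 ∧ u (Sum.inr 0) = 0 ∧ u (Sum.inl 0) ≠ 0 := by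
  obtain ⟨α, β, hα, hβ, hr1, hr0, hl0⟩ := spsi_mulVec hs u
  have h1 := congrFun hsu (Sum.inr 1)
  rw [hr1] at h1
  simp only [Pi.smul_apply, smul_eq_mul] at h1
  rw [Pi.single_eq_of_ne (by simp) 1, mul_zero] at h1
  have h4 : u (Sum.inr 1) = 0 := by
    rcases mul_eq_zero.mp h1 with h | h
    · exact absurd h hβ
    · exact h
  have h0 := congrFun hsu (Sum.inr 0)
  rw [hr0 h4] at h0
  simp only [Pi.smul_apply, smul_eq_mul] at h0
  rw [Pi.single_eq_of_ne (by simp) 1, mul_zero] at h0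
  have h3 : u (Sum.inr 0) = 0 := by
    rcases mul_eq_zero.mp h0 with h | h
    · exact absurd h hα
    · exact h
  refine ⟨h4, h3, ?_⟩
  have hl := congrFun hsu (Sum.inl 0)
  rw [hl0 h4 h3] at hl
  simp only [Pi.smul_apply, Pi.single_eq_same, smul_eq_mul, mul_one] at hl
  intro hz; rw [hz, mul_zero] at hl; exact hc hl.symm

lemma type2 {s : Matrix (Fin 2 ⊕ Fin 2) (Fin 2 ⊕ Fin 2) F} (hs : s ∈ Spsi F)
    {u : (Fin 2 ⊕ Fin 2) → F} {c : F} (hc : c ≠ 0)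
    (hsu : s *ᵥ u = c • (Pi.single (Sum.inl 1) 1 : (Fin 2 ⊕ Fin 2) → F)) :
    u (Sum.inr 1) = 0 ∧ u (Sum.inr 0) = 0 ∧ u (Sum.inl 0) = 0 := by
  obtain ⟨α, β, hα, hβ, hr1, hr0, hl0⟩ := spsi_mulVec hs u
  have h1 := congrFun hsu (Sum.inr 1)
  rw [hr1] at h1
  simp only [Pi.smul_apply, smul_eq_mul] at h1
  rw [Pi.single_eq_of_ne (by simp) 1, mul_zero] at h1
  have h4 : u (Sum.inr 1) = 0 := by
    rcases mul_eq_zero.mp h1 with h | h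
    · exact absurd h hβ
    · exact h
  have h0 := congrFun hsu (Sum.inr 0)
  rw [hr0 h4] at h0
  simp only [Pi.smul_apply, smul_eq_mul] at h0
  rw [Pi.single_eq_of_ne (by simp) 1, mul_zero] at h0
  have h3 : u (Sum.inr 0) = 0 := by
    rcases mul_eq_zero.mp h0 with h | h
    · exact absurd h hα
    · exact h
  have hl := congrFun hsu (Sum.inl 0)
  rw [hl0 h4 h3] at hl
  simp only [Pi.smul_apply, smul_eq_mul] at hl
  rw [Pi.single_eq_of_ne (by simp) 1, mul_zero] at hl
  have h5 : u (Sum.inl 0) = 0 := by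
    rcases mul_eq_zero.mp hl with h | h
    · exact absurd h hα
    · exact h
  exact ⟨h4, h3, h5⟩

variable (F)

theorem Q_Spsi_double_cosets (h2 : (2 : F) ≠ 0) :
    (Sp4 F = DC (Qkl F) 1 (Spsi F) ∪ DC (Qkl F) (tau1 F)⁻¹ (Spsi F) ∪
        DC (Qkl F) (sig1 F)⁻¹ (Spsi F) ∪ DC (Qkl F) (tau1 F * sig1 F)⁻¹ (Spsi F)) ∧
    List.Pairwise Disjoint
      [DC (Qkl F) 1 (Spsi F), DC (Qkl F) (tau1 F)⁻¹ (Spsi F),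
       DC (Qkl F) (sig1 F)⁻¹ (Spsi F), DC (Qkl F) (tau1 F * sig1 F)⁻¹ (Spsi F)] := by
  have hone : (1 : Matrix (Fin 2 ⊕ Fin 2) (Fin 2 ⊕ Fin 2) F) *ᵥ e1F F =
      Pi.single (Sum.inl 0) 1 := by rw [Matrix.one_mulVec]
  have hts : tau1 F * sig1 F ∈ Sp4 F := sp4_mul sp4_tau1 sp4_sig1
  have hinv1 : (1 : Matrix (Fin 2 ⊕ Fin 2) (Fin 2 ⊕ Fin 2) F)⁻¹ = 1 :=
    Matrix.inv_eq_right_inv (Matrix.one_mul 1)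
  constructor
  · apply Set.eq_of_subset_of_subset
    · intro m hm
      have hmdet := sp4_isUnit_det hm
      have hu : m⁻¹ *ᵥ e1F F ≠ 0 := by
        intro h0
        apply e1F_ne_zero (F := F)
        have h1 : m *ᵥ (m⁻¹ *ᵥ e1F F) = e1F F := by
          rw [Matrix.mulVec_mulVec, Matrix.mul_nonsing_inv m hmdet, Matrix.one_mulVec]
        rw [h0, Matrix.mulVec_zero] at h1
        exact h1.symm
      rcases orbit (m⁻¹ *ᵥ e1F F) hu with ⟨s, hs, c, hc, hsu⟩ | ⟨s, hs, c, hc, hsu⟩ |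
        ⟨s, hs, c, hc, hsu⟩ | ⟨s, hs, c, hc, hsu⟩
      · left; left; left
        have h := mem_DC_of hm sp4_one hone hs hc hsu
        rwa [hinv1] at h
      · left; left; right
        exact mem_DC_of hm sp4_tau1 tau1_mulVec_e1 hs hc hsu
      · left; right
        exact mem_DC_of hm sp4_sig1 sig1_mulVec_e1 hs hc hsu
      · right
        exact mem_DC_of hm hts tausig_mulVec_e1 hs hc hsu
    · intro m hm
      rcases hm with ((⟨q, hq, s, hs, rfl⟩ | ⟨q, hq, s, hs, rfl⟩) | ⟨q, hq, s, hs, rfl⟩) |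
        ⟨q, hq, s, hs, rfl⟩
      · exact sp4_mul (sp4_mul (mem_Qkl_iff.mp hq).1 sp4_one) (spsi_subset_sp4 hs)
      · exact sp4_mul (sp4_mul (mem_Qkl_iff.mp hq).1 (sp4_inv sp4_tau1)) (spsi_subset_sp4 hs)
      · exact sp4_mul (sp4_mul (mem_Qkl_iff.mp hq).1 (sp4_inv sp4_sig1)) (spsi_subset_sp4 hs)
      · exact sp4_mul (sp4_mul (mem_Qkl_iff.mp hq).1 (sp4_inv hts)) (spsi_subset_sp4 hs)
  · have coord1 : ∀ m ∈ DC (Qkl F) 1 (Spsi F), ∃ s ∈ Spsi F, ∃ c : F, c ≠ 0 ∧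
        s *ᵥ (m⁻¹ *ᵥ e1F F) = c • (Pi.single (Sum.inl 0) 1 : (Fin 2 ⊕ Fin 2) → F) := by
      intro m hm
      exact DC_inv_coord sp4_one hone (by rwa [hinv1])
    have coord2 : ∀ m ∈ DC (Qkl F) (tau1 F)⁻¹ (Spsi F), ∃ s ∈ Spsi F, ∃ c : F, c ≠ 0 ∧
        s *ᵥ (m⁻¹ *ᵥ e1F F) = c • (Pi.single (Sum.inl 1) 1 : (Fin 2 ⊕ Fin 2) → F) :=
      fun m hm => DC_inv_coord sp4_tau1 tau1_mulVec_e1 hm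
    have coord3 : ∀ m ∈ DC (Qkl F) (sig1 F)⁻¹ (Spsi F), ∃ s ∈ Spsi F, ∃ c : F, c ≠ 0 ∧
        s *ᵥ (m⁻¹ *ᵥ e1F F) = c • (Pi.single (Sum.inr 0) 1 : (Fin 2 ⊕ Fin 2) → F) :=
      fun m hm => DC_inv_coord sp4_sig1 sig1_mulVec_e1 hm
    have coord4 : ∀ m ∈ DC (Qkl F) (tau1 F * sig1 F)⁻¹ (Spsi F), ∃ s ∈ Spsi F, ∃ c : F,
        c ≠ 0 ∧
        s *ᵥ (m⁻¹ *ᵥ e1F F) = c • (Pi.single (Sum.inr 1) 1 : (Fin 2 ⊕ Fin 2) → F) :=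
      fun m hm => DC_inv_coord hts tausig_mulVec_e1 hm
    refine List.Pairwise.cons ?_ (List.Pairwise.cons ?_ (List.Pairwise.cons ?_
      (List.pairwise_singleton _ _)))
    · intro B hB
      simp only [List.mem_cons, List.mem_singleton, List.not_mem_nil, or_false] at hB
      rcases hB with hB | hB | hB
      · subst hB
        rw [Set.disjoint_left]
        intro m hA hB'
        obtain ⟨s, hs, c, hc, hsu⟩ := coord1 m hA
        obtain ⟨s', hs', c', hc', hsu'⟩ := coord2 m hB'
        exact (type1 hs hc hsu).2.2 (type2 hs' hc' hsu').2.2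
      · subst hB
        rw [Set.disjoint_left]
        intro m hA hB'
        obtain ⟨s, hs, c, hc, hsu⟩ := coord1 m hA
        obtain ⟨s', hs', c', hc', hsu'⟩ := coord3 m hB'
        exact (type3 hs' hc' hsu').2 (type1 hs hc hsu).2.1
      · subst hB
        rw [Set.disjoint_left]
        intro m hA hB'
        obtain ⟨s, hs, c, hc, hsu⟩ := coord1 m hA
        obtain ⟨s', hs', c', hc', hsu'⟩ := coord4 m hB'
        exact (type4 hs' hc' hsu') (type1 hs hc hsu).1
    · intro B hB
      simp only [List.mem_cons, List.mem_singleton, List.not_mem_nil, or_false] at hB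
      rcases hB with hB | hB
      · subst hB
        rw [Set.disjoint_left]
        intro m hA hB'
        obtain ⟨s, hs, c, hc, hsu⟩ := coord2 m hA
        obtain ⟨s', hs', c', hc', hsu'⟩ := coord3 m hB'
        exact (type3 hs' hc' hsu').2 (type2 hs hc hsu).2.1
      · subst hB
        rw [Set.disjoint_left]
        intro m hA hB'
        obtain ⟨s, hs, c, hc, hsu⟩ := coord2 m hA
        obtain ⟨s', hs', c', hc', hsu'⟩ := coord4 m hB'
        exact (type4 hs' hc' hsu') (type2 hs hc hsu).1
    · intro B hB
      simp only [List.mem_cons, List.mem_singleton, List.not_mem_nil, or_false] at hB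
      subst hB
      · rw [Set.disjoint_left]
        intro m hA hB'
        obtain ⟨s, hs, c, hc, hsu⟩ := coord3 m hA
        obtain ⟨s', hs', c', hc', hsu'⟩ := coord4 m hB'
        exact (type4 hs' hc' hsu') (type3 hs hc hsu).1
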